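/- Let G₀ be the graph with vertex set {0,1} and edge set {(0,1),(1,0),(1,1)}. A graph G belongs to Mod qId G₀ if and only if G is undirected and each connected component of G is isomorphic to an induced subgraph of G₀ (i.e., either to G₀ itself, to a loopless isolated vertex, or to an isolated vertex with a loop). -/

import Mathlib

open Classical

/-- A graph `(V, E)`: an ambient type `U`, a set `verts ⊆ U` of vertices and an
edge relation `Edge ⊆ verts × verts`. -/
structure AGraph : Type 1 where
  U : Type
  verts : Set U
  Edge : U → U → Prop
  edge_mem : ∀ a b, Edge a b → a ∈ verts ∧ b ∈ verts

namespace AGraph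

/-- The induced subgraph of `G` on a set `S`. -/
def induce (G : AGraph) (S : Set G.U) : AGraph where
  U := G.U
  verts := G.verts ∩ S
  Edge a b := G.Edge a b ∧ a ∈ S ∧ b ∈ S
  edge_mem a b h := ⟨⟨(G.edge_mem a b h.1).1, h.2.1⟩, (G.edge_mem a b h.1).2, h.2.2⟩

/-- The set of vertices reachable from `a` by a directed walk (including `a` itself). -/
def reachSet (G : AGraph) (a : G.U) : Set G.U := {b | Relation.ReflTransGen G.Edge a b}

/-- The subgraph of `G` induced by the set of vertices reachable from `a`. -/
def reachSub (G : AGraph) (a : G.U) : AGraph := G.induce (G.reachSet a)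

/-- A graph is undirected if its edge relation is symmetric. -/
def Undirected (G : AGraph) : Prop := ∀ a b, G.Edge a b → G.Edge b a

end AGraph

/-- A homomorphism of graphs: maps vertices to vertices and edges to edges. -/
def IsHom (G H : AGraph) (f : G.U → H.U) : Prop :=
  (∀ a ∈ G.verts, f a ∈ H.verts) ∧ ∀ a b, G.Edge a b → H.Edge (f a) (f b)

/-- A strong homomorphism: additionally maps non-edges to non-edges. -/
def IsStrongHom (G H : AGraph) (f : G.U → H.U) : Prop :=
  IsHom G H f ∧ ∀ a ∈ G.verts, ∀ b ∈ G.verts, ¬ G.Edge a b → ¬ H.Edge (f a) (f b)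

/-- Isomorphism of graphs. -/
def IsIsomorphic (G H : AGraph) : Prop :=
  ∃ f : G.U → H.U, Set.BijOn f G.verts H.verts ∧
    ∀ a ∈ G.verts, ∀ b ∈ G.verts, (G.Edge a b ↔ H.Edge (f a) (f b))

/-- Terms of type (2,0) over a variable set `X`: variables, the constant `∞`,
and a binary operation (juxtaposition). -/
inductive GTerm (X : Type) : Type
  | var : X → GTerm X
  | inf : GTerm X
  | app : GTerm X → GTerm X → GTerm X

namespace GTerm

/-- The set of variables occurring in a term. -/
def vars {X : Type} : GTerm X → Set X
  | var x => {x}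
  | inf => ∅
  | app t₁ t₂ => t₁.vars ∪ t₂.vars

/-- A term is nontrivial if it contains no occurrence of `∞`. -/
def Nontrivial {X : Type} : GTerm X → Prop
  | var _ => True
  | inf => False
  | app t₁ t₂ => t₁.Nontrivial ∧ t₂.Nontrivial

/-- The leftmost variable of a term (`none` for the bare constant `∞` on the left). -/
def leftVar {X : Type} : GTerm X → Option X
  | var x => some x
  | inf => none
  | app t₁ _ => t₁.leftVar

/-- The edge set of the term graph `G(t)`. -/
def edges {X : Type} : GTerm X → Set (X × X)
  | var _ => ∅
  | inf => ∅
  | app t₁ t₂ =>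
      t₁.edges ∪ t₂.edges ∪
        {p | ∃ x y, t₁.leftVar = some x ∧ t₂.leftVar = some y ∧ p = (x, y)}

theorem vars_finite {X : Type} (t : GTerm X) : t.vars.Finite := by
  induction t with
  | var x => simpa [vars] using Set.finite_singleton x
  | inf => simpa [vars] using Set.finite_empty
  | app t₁ t₂ ih₁ ih₂ => simpa [vars] using ih₁.union ih₂

end GTerm

/-- The term graph `G(t)` of a term `t`: vertices are the variables of `t`. -/
def termGraph {X : Type} (t : GTerm X) : AGraph where
  U := X
  verts := t.vars
  Edge a b := (a, b) ∈ t.edges ∧ a ∈ t.vars ∧ b ∈ t.vars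
  edge_mem a b h := ⟨h.2.1, h.2.2⟩

/-- Evaluation of a term in the graph algebra `A(G)`; `none` plays the role of `∞`:
`x · y = x` if `(x,y)` is an edge, and `∞` otherwise. -/
noncomputable def AGraph.eval (G : AGraph) {X : Type} (h : X → Option G.U) :
    GTerm X → Option G.U
  | .var x => h x
  | .inf => none
  | .app t₁ t₂ =>
      match G.eval h t₁, G.eval h t₂ with
      | some a, some b => if G.Edge a b then some a else none
      | _, _ => none

/-- Identities: pairs of terms. -/
abbrev GId (X : Type) := GTerm X × GTerm X

/-- An assignment takes values in `V(G) ∪ {∞}`. -/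
def AGraph.Assign (G : AGraph) {X : Type} (h : X → Option G.U) : Prop :=
  ∀ x a, h x = some a → a ∈ G.verts

/-- The assignment `h` makes the identity `e` true in `A(G)`. -/
def AGraph.SatIdWith (G : AGraph) {X : Type} (h : X → Option G.U) (e : GId X) : Prop :=
  G.eval h e.1 = G.eval h e.2

/-- `G` satisfies the identity `e`. -/
def AGraph.SatId (G : AGraph) {X : Type} (e : GId X) : Prop :=
  ∀ h : X → Option G.U, G.Assign h → G.SatIdWith h e

/-- An implication (quasi-identity) over the standard countably infinite
variable set `ℕ`: a finite set of identities (the premise) and an identity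
(the consequence). -/
structure Imp : Type where
  prem : Set (GId ℕ)
  concl : GId ℕ
  prem_fin : prem.Finite

/-- `G` satisfies the implication `imp`. -/
def AGraph.SatImp (G : AGraph) (imp : Imp) : Prop :=
  ∀ h : ℕ → Option G.U, G.Assign h →
    (∀ e ∈ imp.prem, G.SatIdWith h e) → G.SatIdWith h imp.concl

/-- The implications satisfied by every member of a class `K` of graphs. -/
def qId (K : Set AGraph) : Set Imp := {imp | ∀ G ∈ K, G.SatImp imp}

/-- The class of graphs satisfying every implication of `Sg`. -/
def ModI (Sg : Set Imp) : Set AGraph := {G | ∀ imp ∈ Sg, G.SatImp imp}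

/-- The finite members of `ModI Sg`. -/
def ModIf (Sg : Set Imp) : Set AGraph := {G | G ∈ ModI Sg ∧ G.verts.Finite}

/-- The pointed graph `G^⊥`: a new vertex `⊥ = none` with edges from `⊥` to all
vertices, including a loop at `⊥`. -/
def AGraph.pointed (G : AGraph) : AGraph where
  U := Option G.U
  verts := insert none (some '' G.verts)
  Edge a b := b ∈ insert none (some '' G.verts) ∧
    (a = none ∨ ∃ u v, a = some u ∧ b = some v ∧ G.Edge u v)
  edge_mem a b h := by
    refine ⟨?_, h.1⟩
    rcases h.2 with rfl | ⟨u, v, rfl, rfl, huv⟩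
    · exact Set.mem_insert _ _
    · exact Set.mem_insert_of_mem _ ⟨u, (G.edge_mem u v huv).1, rfl⟩

/-- Direct product of a family of graphs (componentwise edges). -/
def gProd {I : Type} (G : I → AGraph) : AGraph where
  U := (i : I) → (G i).U
  verts := {a | ∀ i, a i ∈ (G i).verts}
  Edge a b := ∀ i, (G i).Edge (a i) (b i)
  edge_mem a b h :=
    ⟨fun i => ((G i).edge_mem _ _ (h i)).1, fun i => ((G i).edge_mem _ _ (h i)).2⟩

/-- The pointed product `∏ i, (G i)^⊥` of a family of graphs. -/
def pointedProd {I : Type} (G : I → AGraph) : AGraph := gProd fun i => (G i).pointed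

/-- `W` is a strong pointed subproduct of the family `G`:
(1) `W` is an induced subgraph of the pointed product;
(2) every vertex has nonempty support;
(3) for every vertex `a` and every `k` in the support of `a`, the projection `p k`
restricted to `reach_W(a)` is a strong homomorphism into `G k`. -/
def IsSPSofFam {I : Type} (G : I → AGraph) (W : AGraph) : Prop :=
  ∃ S : Set (pointedProd G).U,
    W = (pointedProd G).induce S ∧
    (∀ a ∈ ((pointedProd G).induce S).verts, ∃ i, a i ≠ none) ∧
    (∀ a ∈ ((pointedProd G).induce S).verts, ∀ k : I, a k ≠ none →
      (∀ b ∈ (((pointedProd G).induce S).reachSub a).verts, b k ≠ none) ∧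
      (∀ b ∈ (((pointedProd G).induce S).reachSub a).verts,
        ∀ u, b k = some u → u ∈ (G k).verts) ∧
      (∀ b ∈ (((pointedProd G).induce S).reachSub a).verts,
       ∀ c ∈ (((pointedProd G).induce S).reachSub a).verts,
        ∀ u v, b k = some u → c k = some v →
          ((((pointedProd G).induce S).reachSub a).Edge b c ↔ (G k).Edge u v)))

/-- The class of all strong pointed subproducts of families of members of `K`. -/
def Psps (K : Set AGraph) : Set AGraph :=
  {W | ∃ (I : Type) (G : I → AGraph), (∀ i, G i ∈ K) ∧ IsSPSofFam G W}

/-- The finite members of `Psps K`. -/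
def PspsFin (K : Set AGraph) : Set AGraph := {W | W ∈ Psps K ∧ W.verts.Finite}

/-- Isomorphic copies of members of a class of graphs. -/
def Icl (C : Set AGraph) : Set AGraph := {W | ∃ V ∈ C, IsIsomorphic V W}

/-- `W` is the union of a directed family of members of `C` (the members of the
family are induced subgraphs of a common member, pairwise). -/
def IsDirUnionOf (W : AGraph) (C : Set AGraph) : Prop :=
  ∃ (ι : Type) (V : ι → Set W.U) (E : ι → W.U → W.U → Prop)
    (hmem : ∀ i, ∀ a b, E i a b → a ∈ V i ∧ b ∈ V i),
    (∀ i, AGraph.mk W.U (V i) (E i) (hmem i) ∈ C) ∧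
    (∀ i j, ∃ k,
      (V i ⊆ V k ∧ ∀ a b, E i a b ↔ E k a b ∧ a ∈ V i ∧ b ∈ V i) ∧
      (V j ⊆ V k ∧ ∀ a b, E j a b ↔ E k a b ∧ a ∈ V j ∧ b ∈ V j)) ∧
    W.verts = ⋃ i, V i ∧
    ∀ a b, W.Edge a b ↔ ∃ i, E i a b

/-- The class of all directed unions of members of `C`. -/
def DCl (C : Set AGraph) : Set AGraph := {W | IsDirUnionOf W C}

/-- Condition (a) of Proposition `IPK-ab`. -/
def CondA (K : Set AGraph) (W : AGraph) : Prop :=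
  ∀ a ∈ W.verts, ∃ Ga ∈ K, ∃ φ : W.U → Ga.U, IsStrongHom (W.reachSub a) Ga φ

/-- Condition (b) of Proposition `IPK-ab`. -/
def CondB (K : Set AGraph) (W : AGraph) : Prop :=
  ∀ a ∈ W.verts, ∀ a' ∈ W.verts, a ≠ a' → W.reachSet a = W.reachSet a' →
    ∃ Gp ∈ K, ∃ φ : W.U → Gp.U, IsStrongHom (W.reachSub a) Gp φ ∧ φ a ≠ φ a'

/-- The identities `x_a x_b ≈ x_a` for edges `(a,b)` of `G` (variables are the
vertices of `G`). -/
def GammaE (G : AGraph) : Set (GId G.U) :=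
  {e | ∃ a b, G.Edge a b ∧ e = (GTerm.app (GTerm.var a) (GTerm.var b), GTerm.var a)}

/-- The identities `x_a x_b ≈ ∞` for non-edges `(a,b)` of `G`. -/
def GammaN (G : AGraph) : Set (GId G.U) :=
  {e | ∃ a b, a ∈ G.verts ∧ b ∈ G.verts ∧ ¬ G.Edge a b ∧
    e = (GTerm.app (GTerm.var a) (GTerm.var b), GTerm.inf)}

/-- `Σ(G) = Γ_e(G) ∪ Γ_n(G)`. -/
def SigmaIds (G : AGraph) : Set (GId G.U) := GammaE G ∪ GammaN G

theorem SigmaIds_finite (G : AGraph) (hfin : G.verts.Finite) : (SigmaIds G).Finite := by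
  classical
  have hsub : SigmaIds G ⊆
      (fun p : G.U × G.U =>
        if G.Edge p.1 p.2 then
          (GTerm.app (GTerm.var p.1) (GTerm.var p.2), GTerm.var p.1)
        else (GTerm.app (GTerm.var p.1) (GTerm.var p.2), GTerm.inf)) ''
        (G.verts ×ˢ G.verts) := by
    rintro e (⟨a, b, hab, rfl⟩ | ⟨a, b, ha, hb, hnab, rfl⟩)
    · exact ⟨(a, b), Set.mk_mem_prod (G.edge_mem a b hab).1 (G.edge_mem a b hab).2,
        by simp [hab]⟩
    · exact ⟨(a, b), Set.mk_mem_prod ha hb, by simp [hnab]⟩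
  exact ((hfin.prod hfin).image _).subset hsub

/-- The graph `G₀` with vertices `0, 1` and edges `(0,1), (1,0), (1,1)`. -/
def G0 : AGraph where
  U := ℕ
  verts := {0, 1}
  Edge a b := (a = 0 ∧ b = 1) ∨ (a = 1 ∧ b = 0) ∨ (a = 1 ∧ b = 1)
  edge_mem := by
    rintro a b (⟨rfl, rfl⟩ | ⟨rfl, rfl⟩ | ⟨rfl, rfl⟩) <;> simp


/-!
A homomorphism of graph algebras `A(G) → A(H)` transfers every quasi-identity of `H` back to
`G` along the elements it separates. If the component of a vertex `a` embeds into `G₀`, then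
collapsing everything outside it to `∞` and embedding it into `G₀` is such a homomorphism, and
these homomorphisms separate each vertex from all other elements of `A(G)`.

Conversely, four quasi-identities of `G₀` say in a model that edges are symmetric, that every
edge has a looped endpoint, and that no vertex has two looped or two loopless neighbours. So
every vertex has at most one neighbour besides itself, any two distinct vertices of a component
are adjacent with exactly one of them looped, and sending a vertex to `1` or `0` according as it
carries a loop is an isomorphism of its component onto an induced subgraph of `G₀`.
-/

namespace AGraph

/-- The operation of the graph algebra `A(G)`. -/
noncomputable def mul (G : AGraph) : Option G.U → Option G.U → Option G.U
  | some a, some b => if G.Edge a b then some a else none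
  | _, _ => none

@[simp]
theorem mul_none_left (G : AGraph) (o : Option G.U) : G.mul none o = none := by
  cases o <;> rfl

@[simp]
theorem mul_none_right (G : AGraph) (o : Option G.U) : G.mul o none = none := by
  cases o <;> rfl

@[simp]
theorem mul_some_some (G : AGraph) (a b : G.U) :
    G.mul (some a) (some b) = if G.Edge a b then some a else none := rfl

theorem eq_of_mul_eq_some {G : AGraph} {o₁ o₂ : Option G.U} {a : G.U}
    (h : G.mul o₁ o₂ = some a) : o₁ = some a := by
  rcases o₁ with - | b <;> rcases o₂ with - | c <;> simp_all

theorem eval_app (G : AGraph) {X : Type} (h : X → Option G.U) (t₁ t₂ : GTerm X) :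
    G.eval h (.app t₁ t₂) = G.mul (G.eval h t₁) (G.eval h t₂) := by
  rw [AGraph.eval]
  cases G.eval h t₁ <;> cases G.eval h t₂ <;> rfl

theorem eval_mem_verts {G : AGraph} {X : Type} {h : X → Option G.U} (hA : G.Assign h)
    (t : GTerm X) {a : G.U} (ha : G.eval h t = some a) : a ∈ G.verts := by
  induction t with
  | var x => exact hA x a ha
  | inf => cases ha
  | app t₁ t₂ ih₁ _ =>
    exact ih₁ (eq_of_mul_eq_some ((eval_app G h t₁ t₂).symm.trans ha))

end AGraph

/-- A homomorphism `A(G) → A(H)` of graph algebras, defined on all of `Option G.U` but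
required to map the universe `V(G) ∪ {∞}` into `V(H) ∪ {∞}`. -/
structure IsGraphAlgHom (G H : AGraph) (φ : Option G.U → Option H.U) : Prop where
  map_none : φ none = none
  map_mul : ∀ o₁ o₂, φ (G.mul o₁ o₂) = H.mul (φ o₁) (φ o₂)
  mem_verts : ∀ a ∈ G.verts, ∀ b, φ (some a) = some b → b ∈ H.verts

namespace IsGraphAlgHom

variable {G H : AGraph} {φ : Option G.U → Option H.U}

theorem eval_comp (hφ : IsGraphAlgHom G H φ) {X : Type} (h : X → Option G.U) (t : GTerm X) :
    H.eval (φ ∘ h) t = φ (G.eval h t) := by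
  induction t with
  | var x => rfl
  | inf => exact hφ.map_none.symm
  | app t₁ t₂ ih₁ ih₂ => rw [AGraph.eval_app, AGraph.eval_app, ih₁, ih₂, hφ.map_mul]

theorem assign_comp (hφ : IsGraphAlgHom G H φ) {X : Type} {h : X → Option G.U}
    (hA : G.Assign h) : H.Assign (φ ∘ h) := by
  intro x b hb
  rcases hx : h x with - | a
  · rw [Function.comp_apply, hx, hφ.map_none] at hb
    cases hb
  · rw [Function.comp_apply, hx] at hb
    exact hφ.mem_verts a (hA x a hx) b hb

theorem map_eq_of_satImp (hφ : IsGraphAlgHom G H φ) {imp : Imp} (hH : H.SatImp imp)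
    {h : ℕ → Option G.U} (hA : G.Assign h) (hprem : ∀ e ∈ imp.prem, G.SatIdWith h e) :
    φ (G.eval h imp.concl.1) = φ (G.eval h imp.concl.2) := by
  have hprem' : ∀ e ∈ imp.prem, H.SatIdWith (φ ∘ h) e := fun e he => by
    rw [AGraph.SatIdWith, hφ.eval_comp, hφ.eval_comp]
    exact congrArg φ (hprem e he)
  simpa only [AGraph.SatIdWith, hφ.eval_comp] using hH _ (hφ.assign_comp hA) hprem'

end IsGraphAlgHom

theorem AGraph.satImp_of_separating {G : AGraph} {imp : Imp}
    (hsep : ∀ a ∈ G.verts, ∀ o ≠ some a, ∃ H : AGraph, H.SatImp imp ∧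
      ∃ φ, IsGraphAlgHom G H φ ∧ φ (some a) ≠ φ o) :
    G.SatImp imp := by
  intro h hA hprem
  by_contra hne
  change G.eval h imp.concl.1 ≠ G.eval h imp.concl.2 at hne
  obtain ⟨a, ha, o, hoa, hvals⟩ : ∃ a ∈ G.verts, ∃ o ≠ some a,
      (G.eval h imp.concl.1 = some a ∧ G.eval h imp.concl.2 = o) ∨
      (G.eval h imp.concl.2 = some a ∧ G.eval h imp.concl.1 = o) := by
    rcases h₁ : G.eval h imp.concl.1 with - | a
    · obtain ⟨b, h₂⟩ := Option.ne_none_iff_exists'.1 (h₁ ▸ hne.symm)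
      exact ⟨b, AGraph.eval_mem_verts hA _ h₂, none, by simp, Or.inr ⟨h₂, rfl⟩⟩
    · exact ⟨a, AGraph.eval_mem_verts hA _ h₁, _, h₁ ▸ hne.symm, Or.inl ⟨rfl, rfl⟩⟩
  obtain ⟨H, hH, φ, hφ, hφa⟩ := hsep a ha o hoa
  have hφeq := hφ.map_eq_of_satImp hH hA hprem
  rcases hvals with ⟨h₁, h₂⟩ | ⟨h₂, h₁⟩
  · exact hφa (h₁ ▸ h₂ ▸ hφeq)
  · exact hφa (h₁ ▸ h₂ ▸ hφeq.symm)

noncomputable def restrictProj {G H : AGraph} (R : Set G.U) (f : G.U → H.U) :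
    Option G.U → Option H.U
  | some a => if a ∈ R then some (f a) else none
  | none => none

@[simp]
theorem restrictProj_none {G H : AGraph} (R : Set G.U) (f : G.U → H.U) :
    restrictProj R f none = none := rfl

@[simp]
theorem restrictProj_some {G H : AGraph} (R : Set G.U) (f : G.U → H.U) (a : G.U) :
    restrictProj R f (some a) = if a ∈ R then some (f a) else none := rfl

theorem isGraphAlgHom_restrictProj {G H : AGraph} {R : Set G.U} {f : G.U → H.U}
    (hclosed : ∀ a ∈ R, ∀ b, G.Edge a b → b ∈ R) (hmaps : Set.MapsTo f R H.verts)
    (hedge : ∀ a ∈ R, ∀ b ∈ R, (G.Edge a b ↔ H.Edge (f a) (f b))) :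
    IsGraphAlgHom G H (restrictProj R f) where
  map_none := rfl
  map_mul o₁ o₂ := by
    rcases o₁ with - | a
    · rfl
    rcases o₂ with - | b
    · simp
    by_cases ha : a ∈ R
    · by_cases hb : b ∈ R
      · by_cases hab : G.Edge a b <;> simp [ha, hb, hab, ← hedge a ha b hb]
      · have hab : ¬ G.Edge a b := fun hab => hb (hclosed a ha b hab)
        simp [ha, hb, hab]
    · by_cases hab : G.Edge a b <;> simp [ha, hab]
  mem_verts a _ b hb := by
    by_cases ha : a ∈ R
    · simp only [restrictProj_some, ha, if_true, Option.some.injEq] at hb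
      exact hb ▸ hmaps ha
    · simp [ha] at hb

theorem AGraph.mem_reachSub_verts_of_edge {G : AGraph} {a x y : G.U}
    (hx : x ∈ (G.reachSub a).verts) (hxy : G.Edge x y) : y ∈ (G.reachSub a).verts :=
  ⟨(G.edge_mem x y hxy).2, hx.2.tail hxy⟩

theorem isGraphAlgHom_restrictProj_reachSub {G H : AGraph} {a : G.U} {S : Set H.U}
    {f : G.U → H.U} (hf : Set.MapsTo f (G.reachSub a).verts (H.induce S).verts)
    (hedge : ∀ x ∈ (G.reachSub a).verts, ∀ y ∈ (G.reachSub a).verts,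
      ((G.reachSub a).Edge x y ↔ (H.induce S).Edge (f x) (f y))) :
    IsGraphAlgHom G H (restrictProj (G.verts ∩ G.reachSet a) f) := by
  refine isGraphAlgHom_restrictProj (fun _ hx _ => AGraph.mem_reachSub_verts_of_edge hx)
    (fun x hx => (hf hx).1) ?_
  intro x hx y hy
  simpa [AGraph.reachSub, AGraph.induce, hx.2, hy.2, (hf hx).2, (hf hy).2] using hedge x hx y hy

theorem mem_modI_qId_of_isIsomorphic_reachSub {K : Set AGraph} {G : AGraph}
    (hG : ∀ a ∈ G.verts, ∃ H ∈ K, ∃ S : Set H.U,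
      IsIsomorphic (G.reachSub a) (H.induce S)) :
    G ∈ ModI (qId K) := by
  intro imp himp
  refine AGraph.satImp_of_separating fun a ha o hoa => ?_
  obtain ⟨H, hHK, S, f, hbij, hedge⟩ := hG a ha
  change G.U → H.U at f
  have haR : a ∈ G.verts ∩ G.reachSet a := ⟨ha, .refl⟩
  refine ⟨H, himp H hHK, _, isGraphAlgHom_restrictProj_reachSub hbij.mapsTo hedge, ?_⟩
  rcases o with - | b
  · simp [haR]
  · by_cases hbR : b ∈ G.verts ∩ G.reachSet a
    · have hab : a ≠ b := fun h => hoa (h ▸ rfl)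
      simp only [restrictProj_some, haR, hbR, if_true, ne_eq, Option.some.injEq]
      exact hbij.injOn.ne haR hbR hab
    · simp [haR, hbR]

def edgeId (i j : ℕ) : GId ℕ := (.app (.var i) (.var j), .var i)

def nonEdgeId (i j : ℕ) : GId ℕ := (.app (.var i) (.var j), .inf)

def Imp.ofList (prem : List (GId ℕ)) (concl : GId ℕ) : Imp :=
  ⟨{e | e ∈ prem}, concl, prem.finite_toSet⟩

def symmImp : Imp := .ofList [edgeId 0 1, nonEdgeId 1 0] (.var 0, .inf)

def loopOrLoopImp : Imp := .ofList [edgeId 0 1, nonEdgeId 0 0, nonEdgeId 1 1] (.var 0, .inf)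

/- Edges are listed in both directions so that `∞` at one variable forces `∞` at all
three (`x₁ x₀ ≈ x₁` fails at `x₀ = ∞` unless `x₁ = ∞`); otherwise these would fail in `G₀`. -/
def uniqueLooplessNeighbourImp : Imp :=
  .ofList [edgeId 0 1, edgeId 1 0, edgeId 0 2, edgeId 2 0, nonEdgeId 1 1, nonEdgeId 2 2]
    (.var 1, .var 2)

def uniqueLoopedNeighbourImp : Imp :=
  .ofList [edgeId 0 1, edgeId 1 0, edgeId 0 2, edgeId 2 0, edgeId 1 1, edgeId 2 2]
    (.var 1, .var 2)

theorem G0_assign_cases {h : ℕ → Option ℕ} (hA : G0.Assign h) (n : ℕ) :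
    h n = none ∨ h n = some 0 ∨ h n = some 1 := by
  rcases hn : h n with - | a
  · exact .inl rfl
  · rcases hA n a hn with rfl | rfl <;> simp

theorem mem_qId_G0 : ∀ imp ∈ [symmImp, loopOrLoopImp, uniqueLooplessNeighbourImp,
    uniqueLoopedNeighbourImp], imp ∈ qId {G0} := by
  simp only [List.mem_cons, List.not_mem_nil, or_false, forall_eq_or_imp, forall_eq, qId,
    Set.mem_ofPred_eq, Set.mem_singleton_iff]
  refine ⟨?_, ?_, ?_, ?_⟩ <;> intro h hA hprem <;>
    rcases G0_assign_cases hA 0 with h0 | h0 | h0 <;>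
    rcases G0_assign_cases hA 1 with h1 | h1 | h1 <;>
    rcases G0_assign_cases hA 2 with h2 | h2 | h2 <;>
    simp_all [symmImp, loopOrLoopImp, uniqueLooplessNeighbourImp, uniqueLoopedNeighbourImp,
      Imp.ofList, edgeId, nonEdgeId, AGraph.SatIdWith, AGraph.eval, G0]

section Evaluation

variable {G : AGraph}

@[simp]
theorem satIdWith_edgeId (x : ℕ → G.U) (i j : ℕ) :
    G.SatIdWith (fun n => some (x n)) (edgeId i j) ↔ G.Edge (x i) (x j) := by
  by_cases h : G.Edge (x i) (x j) <;>
    simp [AGraph.SatIdWith, edgeId, AGraph.eval_app, h, AGraph.eval]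

@[simp]
theorem satIdWith_nonEdgeId (x : ℕ → G.U) (i j : ℕ) :
    G.SatIdWith (fun n => some (x n)) (nonEdgeId i j) ↔ ¬ G.Edge (x i) (x j) := by
  by_cases h : G.Edge (x i) (x j) <;>
    simp [AGraph.SatIdWith, nonEdgeId, AGraph.eval_app, h, AGraph.eval]

@[simp]
theorem satIdWith_var_var_iff (x : ℕ → G.U) (i j : ℕ) :
    G.SatIdWith (fun n => some (x n)) (.var i, .var j) ↔ x i = x j :=
  Option.some_inj

@[simp]
theorem satIdWith_var_inf_iff (x : ℕ → G.U) (i : ℕ) :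
    G.SatIdWith (fun n => some (x n)) (.var i, .inf) ↔ False :=
  iff_false_intro (Option.some_ne_none _)

theorem satImp_ofList_of_vertices {prem : List (GId ℕ)} {concl : GId ℕ}
    (himp : G.SatImp (.ofList prem concl)) {x : ℕ → G.U} (hx : ∀ n, x n ∈ G.verts)
    (hprem : ∀ e ∈ prem, G.SatIdWith (fun n => some (x n)) e) :
    G.SatIdWith (fun n => some (x n)) concl :=
  himp _ (fun n _ h => Option.some.inj h ▸ hx n) hprem

end Evaluation

namespace ModelG0

variable {G : AGraph} (hG : G ∈ ModI (qId {G0}))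
include hG

theorem edge_symm {a b : G.U} (hab : G.Edge a b) : G.Edge b a := by
  have ha := (G.edge_mem a b hab).1
  have hb := (G.edge_mem a b hab).2
  by_contra hba
  simpa using satImp_ofList_of_vertices (hG symmImp (mem_qId_G0 _ (by simp)))
    (x := fun n => if n = 1 then b else a) (fun n => by split_ifs <;> assumption)
    (by simp [hab, hba])

theorem loop_or_loop_of_edge {a b : G.U} (hab : G.Edge a b) : G.Edge a a ∨ G.Edge b b := by
  have ha := (G.edge_mem a b hab).1
  have hb := (G.edge_mem a b hab).2
  by_contra! hloops
  simpa using satImp_ofList_of_vertices (hG loopOrLoopImp (mem_qId_G0 _ (by simp)))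
    (x := fun n => if n = 1 then b else a) (fun n => by split_ifs <;> assumption)
    (by simp [hab, hloops])

theorem eq_of_edge_of_edge_of_not_loop {a b c : G.U} (hab : G.Edge a b) (hac : G.Edge a c)
    (hb : ¬ G.Edge b b) (hc : ¬ G.Edge c c) : b = c := by
  have ha := (G.edge_mem a b hab).1
  have hbV := (G.edge_mem a b hab).2
  have hcV := (G.edge_mem a c hac).2
  simpa using satImp_ofList_of_vertices (hG uniqueLooplessNeighbourImp (mem_qId_G0 _ (by simp)))
    (x := fun n => if n = 1 then b else if n = 2 then c else a)
    (fun n => by split_ifs <;> assumption)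
    (by simp [hab, hac, hb, hc, edge_symm hG hab, edge_symm hG hac])

theorem eq_of_edge_of_edge_of_loop {a b c : G.U} (hab : G.Edge a b) (hac : G.Edge a c)
    (hb : G.Edge b b) (hc : G.Edge c c) : b = c := by
  have ha := (G.edge_mem a b hab).1
  have hbV := (G.edge_mem a b hab).2
  have hcV := (G.edge_mem a c hac).2
  simpa using satImp_ofList_of_vertices (hG uniqueLoopedNeighbourImp (mem_qId_G0 _ (by simp)))
    (x := fun n => if n = 1 then b else if n = 2 then c else a)
    (fun n => by split_ifs <;> assumption)
    (by simp [hab, hac, hb, hc, edge_symm hG hab, edge_symm hG hac])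

theorem loop_iff_not_loop_of_edge {a b : G.U} (hab : G.Edge a b) (hne : a ≠ b) :
    G.Edge a a ↔ ¬ G.Edge b b :=
  ⟨fun ha hb => hne (eq_of_edge_of_edge_of_loop hG ha hab ha hb),
    (loop_or_loop_of_edge hG hab).resolve_right⟩

theorem eq_of_edge_of_edge {a b c : G.U} (hab : G.Edge a b) (hac : G.Edge a c)
    (hb : b ≠ a) (hc : c ≠ a) : b = c := by
  have hbc : G.Edge b b ↔ G.Edge c c := by
    have := (loop_iff_not_loop_of_edge hG hab hb.symm).symm.trans
      (loop_iff_not_loop_of_edge hG hac hc.symm)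
    tauto
  by_cases hbb : G.Edge b b
  · exact eq_of_edge_of_edge_of_loop hG hab hac hbb (hbc.1 hbb)
  · exact eq_of_edge_of_edge_of_not_loop hG hab hac hbb (hbc.not.1 hbb)

theorem reachSet_subset_closedNeighbourhood {a : G.U} :
    G.reachSet a ⊆ {x | x = a ∨ G.Edge a x} := by
  intro x hx
  induction hx with
  | refl => exact .inl rfl
  | @tail y z _ hyz ih =>
    rcases ih with rfl | hay
    · exact .inr hyz
    by_cases hzy : z = y
    · exact .inr (hzy ▸ hay)
    by_cases hay' : a = y
    · exact .inr (hay' ▸ hyz)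
    exact .inl (eq_of_edge_of_edge hG hyz (edge_symm hG hay) hzy hay')

theorem edge_of_mem_reachSet {a x y : G.U} (hx : x ∈ G.reachSet a) (hy : y ∈ G.reachSet a)
    (hxy : x ≠ y) : G.Edge x y := by
  rcases reachSet_subset_closedNeighbourhood hG hx with rfl | hax
  · exact (reachSet_subset_closedNeighbourhood hG hy).resolve_left hxy.symm
  rcases reachSet_subset_closedNeighbourhood hG hy with rfl | hay
  · exact edge_symm hG hax
  by_cases hxa : x = a
  · exact hxa ▸ hay
  by_cases hya : y = a
  · exact hya ▸ edge_symm hG hax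
  exact absurd (eq_of_edge_of_edge hG hax hay hxa hya) hxy

theorem edge_iff_loop_or_loop {a x y : G.U} (hx : x ∈ G.reachSet a) (hy : y ∈ G.reachSet a) :
    G.Edge x y ↔ G.Edge x x ∨ G.Edge y y := by
  by_cases hxy : x = y
  · rw [hxy, or_self]
  · exact iff_of_true (edge_of_mem_reachSet hG hx hy hxy)
      (loop_or_loop_of_edge hG (edge_of_mem_reachSet hG hx hy hxy))

theorem eq_of_loop_iff_loop {a x y : G.U} (hx : x ∈ G.reachSet a) (hy : y ∈ G.reachSet a)
    (hloop : G.Edge x x ↔ G.Edge y y) : x = y := by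
  by_contra hxy
  have := loop_iff_not_loop_of_edge hG (edge_of_mem_reachSet hG hx hy hxy) hxy
  tauto

theorem isIsomorphic_reachSub (a : G.U) :
    ∃ S : Set ℕ, IsIsomorphic (G.reachSub a) (G0.induce S) := by
  set f : G.U → ℕ := fun x => if G.Edge x x then 1 else 0
  have hf01 : ∀ x, f x ∈ G0.verts := fun x => by
    by_cases hx : G.Edge x x
    · exact .inr (if_pos hx)
    · exact .inl (if_neg hx)
  have hfedge : ∀ x y, G0.Edge (f x) (f y) ↔ G.Edge x x ∨ G.Edge y y := fun x y => by
    by_cases hx : G.Edge x x <;> by_cases hy : G.Edge y y <;> simp [f, hx, hy, G0]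
  have hfloop : ∀ x, f x = 1 ↔ G.Edge x x := fun x => by
    by_cases hx : G.Edge x x <;> simp [f, hx]
  have hinj : Set.InjOn f (G.reachSub a).verts := fun x hx y hy hxy =>
    eq_of_loop_iff_loop hG hx.2 hy.2 (by rw [← hfloop x, ← hfloop y, hxy])
  refine ⟨f '' (G.reachSub a).verts, f, ?_, fun x hx y hy => ?_⟩
  · exact ⟨fun x hx => ⟨hf01 x, Set.mem_image_of_mem f hx⟩, hinj, fun _ hn => hn.2⟩
  · have hedge : G.Edge x y ↔ G0.Edge (f x) (f y) :=
      (edge_iff_loop_or_loop hG hx.2 hy.2).trans (hfedge x y).symm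
    exact ⟨fun h => ⟨hedge.1 h.1, Set.mem_image_of_mem f hx, Set.mem_image_of_mem f hy⟩,
      fun h => ⟨hedge.2 h.1, hx.2, hy.2⟩⟩

end ModelG0

/-- `G ∈ Mod qId G₀` iff `G` is undirected and each connected
component of `G` is isomorphic to an induced subgraph of `G₀`. -/
theorem statement_13 (G : AGraph) :
    G ∈ ModI (qId {G0}) ↔
      (G.Undirected ∧
        ∀ a ∈ G.verts, ∃ S : Set ℕ, IsIsomorphic (G.reachSub a) (G0.induce S)) := by
  refine ⟨fun hG => ⟨fun _ _ => ModelG0.edge_symm hG,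
    fun a _ => ModelG0.isIsomorphic_reachSub hG a⟩, ?_⟩
  rintro ⟨-, hcomp⟩
  exact mem_modI_qId_of_isIsomorphic_reachSub fun a ha => ⟨G0, rfl, hcomp a ha⟩
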